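/- Fix a > 0, ζ ∈ (0, 1/a), and dimension d ≥ 1. Let f_σ(x) := exp(−σ|x|²/2) on ℝ^d. Then the H^{aℓ} norm of f_{ζ/ℓ} satisfies ‖f_{ζ/ℓ}‖_{aℓ} = [πℓ/(ζ(1 − aζ))]^{d/4} · (1 + O(1/ℓ)) as ℓ → +∞. -/

import Mathlib

open MeasureTheory

/-- Fourier transform on `ℝ^d`, normalized with `(2π)^{-d/2}`. -/
noncomputable def FT (d : ℕ) (f : EuclideanSpace ℝ (Fin d) → ℂ)
    (k : EuclideanSpace ℝ (Fin d)) : ℂ :=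
  (((2 * Real.pi) ^ (-(d : ℝ) / 2) : ℝ) : ℂ) *
    ∫ x, Complex.exp (-(Complex.I * ((inner ℝ k x : ℝ) : ℂ))) * f x

/-- Inverse Fourier transform on `ℝ^d`. -/
noncomputable def invFT (d : ℕ) (F : EuclideanSpace ℝ (Fin d) → ℂ)
    (x : EuclideanSpace ℝ (Fin d)) : ℂ :=
  (((2 * Real.pi) ^ (-(d : ℝ) / 2) : ℝ) : ℂ) *
    ∫ k, Complex.exp (Complex.I * ((inner ℝ k x : ℝ) : ℂ)) * F k

/-- Membership in the Bessel-potential Sobolev space `H^s(ℝ^d, ℂ)`. -/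
def MemSob (d : ℕ) (s : ℝ) (f : EuclideanSpace ℝ (Fin d) → ℂ) : Prop :=
  Integrable (fun k : EuclideanSpace ℝ (Fin d) => (1 + ‖k‖ ^ 2) ^ s * ‖FT d f k‖ ^ 2)

/-- The squared Sobolev norm `‖f‖_s² = ∫ (1+|k|²)^s |𝓕f(k)|² dk`. -/
noncomputable def sobNormSq (d : ℕ) (s : ℝ) (f : EuclideanSpace ℝ (Fin d) → ℂ) : ℝ :=
  ∫ k : EuclideanSpace ℝ (Fin d), (1 + ‖k‖ ^ 2) ^ s * ‖FT d f k‖ ^ 2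

/-- The Sobolev norm `‖f‖_s`. -/
noncomputable def sobNorm (d : ℕ) (s : ℝ) (f : EuclideanSpace ℝ (Fin d) → ℂ) : ℝ :=
  Real.sqrt (sobNormSq d s f)

/-- The sharp constant `K_{ℓ,m,n,d}` for the multiplication `H^m × H^n → H^ℓ`. -/
noncomputable def sharpK (d : ℕ) (l m n : ℝ) : ℝ :=
  sInf {K : ℝ | 0 ≤ K ∧ ∀ f g : EuclideanSpace ℝ (Fin d) → ℂ,
    MemSob d m f → MemSob d n g →
    sobNorm d l (fun x => f x * g x) ≤ K * sobNorm d m f * sobNorm d n g}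

/-- The Gaussian `f_σ(x) = exp(−σ|x|²/2)` on `ℝ^d`. -/
noncomputable def gauss (d : ℕ) (σ : ℝ) : EuclideanSpace ℝ (Fin d) → ℂ :=
  fun x => Complex.exp (-((σ * ‖x‖ ^ 2 / 2 : ℝ) : ℂ))

/-!
The Fourier transform of `f_σ` is again a Gaussian, so `‖f_σ‖_s² = σ^{-d} ∫ (1+|k|²)^s e^{-|k|²/σ} dk`.
Write `1/σ = s + c`; for `s = aℓ`, `σ = ζ/ℓ` this is `c = ℓ(1 - aζ)/ζ > 0`. Pointwise
`1 - s|k|⁴ ≤ (1+|k|²)^s e^{-s|k|²} ≤ 1`, and `|k|⁴ e^{-c|k|²}` is dominated by a Gaussian of half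
the rate, so `‖f_σ‖_s² = (π/(σ²c))^{d/2} (1 + O(s/c²))`, where `π/(σ²c) = πℓ/(ζ(1 - aζ))` and
`s/c² = O(1/ℓ)`. Taking square roots keeps the relative error.
-/

open Real

theorem FT_gauss (d : ℕ) {σ : ℝ} (hσ : 0 < σ) (k : EuclideanSpace ℝ (Fin d)) :
    FT d (gauss d σ) k = ((σ ^ (-(d : ℝ) / 2) * exp (-‖k‖ ^ 2 / (2 * σ)) : ℝ) : ℂ) := by
  have hb : (0 : ℝ) < ((σ / 2 : ℂ)).re := by norm_num [hσ]
  have hintegrand : (fun x : EuclideanSpace ℝ (Fin d) =>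
      Complex.exp (-(Complex.I * ((inner ℝ k x : ℝ) : ℂ))) * gauss d σ x)
      = fun x => Complex.exp (-(σ / 2 : ℂ) * ‖x‖ ^ 2 + (-Complex.I) * ((inner ℝ k x : ℝ) : ℂ)) := by
    funext x
    rw [gauss, ← Complex.exp_add]
    push_cast
    ring_nf
  have hpow : ((π / (σ / 2) : ℂ)) ^ ((d : ℂ) / 2) = (((2 * π / σ) ^ ((d : ℝ) / 2) : ℝ) : ℂ) := by
    rw [show (π / (σ / 2) : ℂ) = ((2 * π / σ : ℝ) : ℂ) by push_cast; ring,
      show ((d : ℂ) / 2) = (((d : ℝ) / 2 : ℝ) : ℂ) by push_cast; ring,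
      ← Complex.ofReal_cpow (by positivity)]
  have hexp : Complex.exp ((-Complex.I) ^ 2 * (‖k‖ : ℂ) ^ 2 / (4 * (σ / 2)))
      = ((exp (-‖k‖ ^ 2 / (2 * σ)) : ℝ) : ℂ) := by
    rw [Complex.ofReal_exp, neg_sq, Complex.I_sq]
    push_cast
    ring_nf
  rw [FT, hintegrand, GaussianFourier.integral_cexp_neg_mul_sq_norm_add hb,
    finrank_euclideanSpace_fin, hpow, hexp, ← Complex.ofReal_mul, ← Complex.ofReal_mul]
  congr 1
  have h2π : (0 : ℝ) < 2 * π := by positivity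
  rw [neg_div, rpow_neg h2π.le, rpow_neg hσ.le, div_rpow h2π.le hσ.le]
  field_simp

theorem sobNormSq_gauss (d : ℕ) {σ : ℝ} (hσ : 0 < σ) (s : ℝ) :
    sobNormSq d s (gauss d σ)
      = σ ^ (-(d : ℝ)) * ∫ k : EuclideanSpace ℝ (Fin d),
          (1 + ‖k‖ ^ 2) ^ s * exp (-(1 / σ) * ‖k‖ ^ 2) := by
  rw [sobNormSq, ← integral_const_mul]
  congr 1 with k
  have hpre : (σ ^ (-(d : ℝ) / 2)) ^ 2 = σ ^ (-(d : ℝ)) := by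
    rw [← rpow_natCast, ← rpow_mul hσ.le]
    norm_num
  have hexp : (exp (-‖k‖ ^ 2 / (2 * σ))) ^ 2 = exp (-(1 / σ) * ‖k‖ ^ 2) := by
    rw [← exp_nat_mul]
    congr 1
    field_simp
    ring
  rw [FT_gauss d hσ k, Complex.norm_real, norm_of_nonneg (by positivity), mul_pow, hpre, hexp]
  ring

theorem one_add_rpow_mul_exp_le {s c u : ℝ} (hs : 0 ≤ s) (hu : 0 ≤ 1 + u) :
    (1 + u) ^ s * exp (-(s + c) * u) ≤ exp (-c * u) := by
  calc (1 + u) ^ s * exp (-(s + c) * u) ≤ exp u ^ s * exp (-(s + c) * u) := by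
        gcongr
        linarith [add_one_le_exp u]
    _ = exp (-c * u) := by rw [← exp_mul, ← exp_add]; ring_nf

theorem exp_mul_mul_one_sub_le_one_add_rpow {s u : ℝ} (hs : 0 ≤ s) (hu : 0 ≤ u) :
    exp (u * s) * (1 - s * u ^ 2) ≤ (1 + u) ^ s := by
  have hlog : u - u ^ 2 ≤ log (1 + u) := by
    have : u - u ^ 2 ≤ 2 * u / (u + 2) := by
      rw [le_div_iff₀ (by linarith)]
      nlinarith [pow_nonneg hu 3]
    linarith [le_log_one_add_of_nonneg hu]
  calc exp (u * s) * (1 - s * u ^ 2)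
      ≤ exp (u * s) * exp (-(s * u ^ 2)) := by
        gcongr
        linarith [add_one_le_exp (-(s * u ^ 2))]
    _ = exp (log (1 + u) * s - (log (1 + u) - (u - u ^ 2)) * s) := by
        rw [← exp_add]
        ring_nf
    _ ≤ exp (log (1 + u) * s) := by
        gcongr
        nlinarith
    _ = (1 + u) ^ s := by rw [rpow_def_of_pos (by linarith)]

theorem sq_mul_exp_neg_le {c u : ℝ} (hc : 0 < c) (hu : 0 ≤ u) :
    u ^ 2 * exp (-c * u) ≤ 16 / c ^ 2 * exp (-(c / 2) * u) := by
  have hlin : u ≤ 4 / c * exp (c / 4 * u) := by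
    rw [div_mul_eq_mul_div, le_div_iff₀ hc]
    linarith [add_one_le_exp (c / 4 * u)]
  calc u ^ 2 * exp (-c * u) ≤ (4 / c * exp (c / 4 * u)) ^ 2 * exp (-c * u) := by gcongr
    _ = 16 / c ^ 2 * exp (-(c / 2) * u) := by
        rw [mul_pow, div_pow, ← exp_nat_mul, mul_assoc, ← exp_add]
        ring_nf

theorem exp_sub_le_one_add_rpow_mul_exp {s c u : ℝ} (hs : 0 ≤ s) (hc : 0 < c) (hu : 0 ≤ u) :
    exp (-c * u) - 16 * s / c ^ 2 * exp (-(c / 2) * u) ≤ (1 + u) ^ s * exp (-(s + c) * u) := by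
  have hmoment := mul_le_mul_of_nonneg_left (sq_mul_exp_neg_le hc hu) hs
  calc exp (-c * u) - 16 * s / c ^ 2 * exp (-(c / 2) * u)
      ≤ exp (-c * u) * (1 - s * u ^ 2) := by linear_combination hmoment
    _ = exp (u * s) * (1 - s * u ^ 2) * exp (-(s + c) * u) := by
        rw [mul_right_comm, ← exp_add]
        ring_nf
    _ ≤ (1 + u) ^ s * exp (-(s + c) * u) := by
        gcongr
        exact exp_mul_mul_one_sub_le_one_add_rpow hs hu

section GaussianMoments

variable {V : Type*} [NormedAddCommGroup V] [InnerProductSpace ℝ V] [FiniteDimensional ℝ V]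
  [MeasurableSpace V] [BorelSpace V]

theorem integrable_exp_neg_mul_sq_norm {b : ℝ} (hb : 0 < b) :
    Integrable (fun v : V => exp (-b * ‖v‖ ^ 2)) := by
  have h := (GaussianFourier.integrable_cexp_neg_mul_sq_norm_add (V := V)
    (b := (b : ℂ)) (by simpa using hb) 0 0).norm
  simpa [Complex.norm_exp, ← Complex.ofReal_pow, ← Complex.ofReal_mul,
    ← Complex.ofReal_neg] using h

theorem integrable_one_add_sq_norm_rpow_mul_exp {s c : ℝ} (hs : 0 ≤ s) (hc : 0 < c) :
    Integrable (fun v : V => (1 + ‖v‖ ^ 2) ^ s * exp (-(s + c) * ‖v‖ ^ 2)) := by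
  have hcont : Continuous (fun v : V => (1 + ‖v‖ ^ 2) ^ s * exp (-(s + c) * ‖v‖ ^ 2)) :=
    ((by fun_prop : Continuous fun v : V => 1 + ‖v‖ ^ 2).rpow_const
      fun v => Or.inl (by positivity)).mul (by fun_prop)
  refine (integrable_exp_neg_mul_sq_norm hc).mono' hcont.aestronglyMeasurable
    (ae_of_all _ fun v => ?_)
  rw [norm_of_nonneg (by positivity)]
  exact one_add_rpow_mul_exp_le hs (by positivity)

theorem integral_one_add_sq_norm_rpow_mul_exp_le {s c : ℝ} (hs : 0 ≤ s) (hc : 0 < c) :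
    ∫ v : V, (1 + ‖v‖ ^ 2) ^ s * exp (-(s + c) * ‖v‖ ^ 2)
      ≤ (π / c) ^ ((Module.finrank ℝ V : ℝ) / 2) := by
  rw [← GaussianFourier.integral_rexp_neg_mul_sq_norm hc]
  exact integral_mono (integrable_one_add_sq_norm_rpow_mul_exp hs hc)
    (integrable_exp_neg_mul_sq_norm hc) fun v => one_add_rpow_mul_exp_le hs (by positivity)

theorem le_integral_one_add_sq_norm_rpow_mul_exp {s c : ℝ} (hs : 0 ≤ s) (hc : 0 < c) :
    (π / c) ^ ((Module.finrank ℝ V : ℝ) / 2)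
        * (1 - 16 * 2 ^ ((Module.finrank ℝ V : ℝ) / 2) * s / c ^ 2)
      ≤ ∫ v : V, (1 + ‖v‖ ^ 2) ^ s * exp (-(s + c) * ‖v‖ ^ 2) := by
  set n : ℝ := (Module.finrank ℝ V : ℝ) / 2
  have hhalf : (π / (c / 2)) ^ n = 2 ^ n * (π / c) ^ n := by
    rw [← mul_rpow (by norm_num) (by positivity)]
    congr 1
    field_simp
  have hminorant := (integrable_exp_neg_mul_sq_norm (V := V) hc).sub
    ((integrable_exp_neg_mul_sq_norm (half_pos hc)).const_mul (16 * s / c ^ 2))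
  calc (π / c) ^ n * (1 - 16 * 2 ^ n * s / c ^ 2)
      = ∫ v : V, exp (-c * ‖v‖ ^ 2) - 16 * s / c ^ 2 * exp (-(c / 2) * ‖v‖ ^ 2) := by
        rw [integral_sub (integrable_exp_neg_mul_sq_norm hc)
          ((integrable_exp_neg_mul_sq_norm (half_pos hc)).const_mul _), integral_const_mul,
          GaussianFourier.integral_rexp_neg_mul_sq_norm hc,
          GaussianFourier.integral_rexp_neg_mul_sq_norm (half_pos hc), hhalf]
        ring
    _ ≤ _ := integral_mono hminorant (integrable_one_add_sq_norm_rpow_mul_exp hs hc)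
        fun v => exp_sub_le_one_add_rpow_mul_exp hs hc (by positivity)

end GaussianMoments

theorem sobNormSq_gauss_bounds (d : ℕ) {s c σ : ℝ} (hs : 0 ≤ s) (hc : 0 < c)
    (hσ : σ * (s + c) = 1) :
    (π / (σ ^ 2 * c)) ^ ((d : ℝ) / 2) * (1 - 16 * 2 ^ ((d : ℝ) / 2) * s / c ^ 2)
        ≤ sobNormSq d s (gauss d σ) ∧
      sobNormSq d s (gauss d σ) ≤ (π / (σ ^ 2 * c)) ^ ((d : ℝ) / 2) := by
  have hσpos : 0 < σ := pos_of_mul_pos_left (hσ ▸ one_pos) (by positivity)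
  have hprefactor : σ ^ (-(d : ℝ)) * (π / c) ^ ((d : ℝ) / 2)
      = (π / (σ ^ 2 * c)) ^ ((d : ℝ) / 2) := by
    rw [show -(d : ℝ) = -2 * ((d : ℝ) / 2) by ring, rpow_mul hσpos.le,
      ← mul_rpow (by positivity) (by positivity), rpow_neg hσpos.le, rpow_two]
    field_simp
  have hupper := integral_one_add_sq_norm_rpow_mul_exp_le (V := EuclideanSpace ℝ (Fin d)) hs hc
  have hlower := le_integral_one_add_sq_norm_rpow_mul_exp (V := EuclideanSpace ℝ (Fin d)) hs hc
  rw [finrank_euclideanSpace_fin] at hupper hlower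
  rw [sobNormSq_gauss d hσpos, ← hprefactor, show 1 / σ = s + c by
    rw [eq_comm, ← hσ]; field_simp]
  constructor
  · rw [mul_assoc]; gcongr
  · gcongr

theorem abs_sqrt_div_sqrt_sub_one_le {S B ε : ℝ} (hB : 0 < B) (hlo : B * (1 - ε) ≤ S)
    (hhi : S ≤ B) : |√S / √B - 1| ≤ ε := by
  have hε : 0 ≤ ε := by nlinarith
  have ht1 : S / B ≤ 1 := (div_le_one hB).mpr hhi
  have ht0 : 1 - ε ≤ S / B := (le_div_iff₀ hB).mpr (by linarith)
  rw [← sqrt_div' _ hB.le, abs_le]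
  constructor
  · linarith [le_sqrt_self_iff.mpr ht1]
  · linarith [sqrt_le_one.mpr ht1]

theorem stmt14_general (d : ℕ) (a ζ : ℝ) (ha : 0 < a) (hζ : 0 < ζ)
    (hζa : ζ < 1 / a) :
    ∃ C Λ : ℝ, 0 < C ∧ 0 < Λ ∧ ∀ l : ℝ, Λ ≤ l →
      |sobNorm d (a * l) (gauss d (ζ / l)) /
          (Real.pi * l / (ζ * (1 - a * ζ))) ^ ((d : ℝ) / 4) - 1| ≤ C / l := by
  have hβ : 0 < 1 - a * ζ := by linarith [(lt_div_iff₀ ha).mp hζa]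
  set C := 16 * 2 ^ ((d : ℝ) / 2) * a * ζ ^ 2 / (1 - a * ζ) ^ 2 with hC
  have hCpos : 0 < C := by positivity
  refine ⟨C, C, hCpos, hCpos, fun l hCl => ?_⟩
  have hl : 0 < l := hCpos.trans_le hCl
  set c := l * (1 - a * ζ) / ζ with hc
  have hσ : ζ / l * (a * l + c) = 1 := by rw [hc]; field_simp; ring
  have hX : π / ((ζ / l) ^ 2 * c) = π * l / (ζ * (1 - a * ζ)) := by rw [hc]; field_simp
  have herror : 16 * 2 ^ ((d : ℝ) / 2) * (a * l) / c ^ 2 = C / l := by rw [hC, hc]; field_simp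
  obtain ⟨hlower, hupper⟩ := sobNormSq_gauss_bounds d (mul_pos ha hl).le (by positivity) hσ
  rw [hX, herror] at hlower
  rw [hX] at hupper
  rw [sobNorm, show (d : ℝ) / 4 = (d : ℝ) / 2 * (1 / 2) by ring, rpow_mul (by positivity),
    ← sqrt_eq_rpow]
  exact abs_sqrt_div_sqrt_sub_one_le (by positivity) hlower hupper

/-- fix `a > 0`, `ζ ∈ (0,1/a)`, `d ≥ 1`. Then
`‖f_{ζ/ℓ}‖_{aℓ} = [πℓ/(ζ(1−aζ))]^{d/4} (1 + O(1/ℓ))` as `ℓ → +∞`. -/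
theorem stmt14 (d : ℕ) (hd : 1 ≤ d) (a ζ : ℝ) (ha : 0 < a) (hζ : 0 < ζ)
    (hζa : ζ < 1 / a) :
    ∃ C Λ : ℝ, 0 < C ∧ 0 < Λ ∧ ∀ l : ℝ, Λ ≤ l →
      |sobNorm d (a * l) (gauss d (ζ / l)) /
          (Real.pi * l / (ζ * (1 - a * ζ))) ^ ((d : ℝ) / 4) - 1| ≤ C / l :=
  stmt14_general d a ζ ha hζ hζa
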